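/- arXiv:2301.07090 — 3 statements merged into one kernel-verified Lean document; each statement's English description precedes it below -/
import Mathlib

section
/- Let n ≥ 2 and let k, i, j satisfy 1 ≤ i < k and k+1 < j ≤ n. Then τ^{n,k}_{i,j} = (s_{k−1} s_{k−2} ⋯ s_i) ∘ (s_{k+1} s_{k+2} ⋯ s_{j−1}), where all products are composed right to left. -/
/-! `τ^{n,k}_{i,j}` is determined by its values at `i`, `j` and by being increasing off `{i, j}`:
two such permutations agree on `{i, j}`, hence map its complement onto the same set, and an
increasing bijection between subsets of a well-order is unique. So it suffices to compute the
product of adjacent transpositions pointwise: `s_{k+1} ⋯ s_{j-1}` sends `j ↦ k + 1` and shifts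
`k + 1, …, j - 1` up by one, and `s_{k-1} ⋯ s_i` sends `i ↦ k` and shifts `i + 1, …, k` down
by one. -/

/-- `IsTau k hk i j w`: defining property of `τ^{n,k}_{i,j}` (0-indexed form). -/
def IsTau {n : ℕ} (k : ℕ) (hk : k + 1 < n) (i j : Fin n) (w : Equiv.Perm (Fin n)) : Prop :=
  w i = ⟨k, Nat.lt_of_succ_lt hk⟩ ∧ w j = ⟨k + 1, hk⟩ ∧
    ∀ s t : Fin n, s < t → s ≠ i → s ≠ j → t ≠ i → t ≠ j → w s < w t

/-- The adjacent transposition `s_l = (l, l+1)` (0-indexed), interpreted as the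
identity out of range. -/
def sT (n l : ℕ) : Equiv.Perm (Fin n) :=
  if h : l + 1 < n then Equiv.swap ⟨l, Nat.lt_of_succ_lt h⟩ ⟨l + 1, h⟩ else 1

/-- The product `s_a s_{a+1} ⋯ s_b`, composed right to left (identity if `b < a`). -/
def ascProd (n a b : ℕ) : Equiv.Perm (Fin n) :=
  ((List.range' a (b + 1 - a)).map (sT n)).prod

/-- The product `s_a s_{a-1} ⋯ s_b`, composed right to left (identity if `a < b`). -/
def descProd (n a b : ℕ) : Equiv.Perm (Fin n) :=
  ((List.range' b (a + 1 - b)).reverse.map (sT n)).prod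

theorem Equiv.Perm.eq_of_eqOn_of_strictMonoOn_compl {α : Type*} [LinearOrder α]
    [WellFoundedLT α] {s : Set α} {v w : Equiv.Perm α} (hvw : Set.EqOn v w s)
    (hv : StrictMonoOn v sᶜ) (hw : StrictMonoOn w sᶜ) : v = w := by
  have hcompl : sᶜ.domRestrict v = sᶜ.domRestrict w := by
    rw [← hv.domRestrict.range_inj hw.domRestrict, Set.range_domRestrict, Set.range_domRestrict,
      Equiv.image_compl, Equiv.image_compl, hvw.image_eq]
  ext x
  by_cases hx : x ∈ s
  · rw [hvw hx]
  · exact congrFun hcompl ⟨x, hx⟩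

theorem IsTau.strictMonoOn {n k : ℕ} {hk : k + 1 < n} {i j : Fin n} {w : Equiv.Perm (Fin n)}
    (hw : IsTau k hk i j w) : StrictMonoOn w {i, j}ᶜ := by
  intro s hs t ht hst
  simp only [Set.mem_compl_iff, Set.mem_insert_iff, Set.mem_singleton_iff, not_or] at hs ht
  exact hw.2.2 s t hst hs.1 hs.2 ht.1 ht.2

theorem IsTau.eq {n k : ℕ} {hk : k + 1 < n} {i j : Fin n} {w w' : Equiv.Perm (Fin n)}
    (hw : IsTau k hk i j w) (hw' : IsTau k hk i j w') : w = w' := by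
  refine Equiv.Perm.eq_of_eqOn_of_strictMonoOn_compl ?_ hw.strictMonoOn hw'.strictMonoOn
  rintro x (rfl | rfl)
  · exact hw.1.trans hw'.1.symm
  · exact hw.2.1.trans hw'.2.1.symm

theorem IsTau.iff_eq {n k : ℕ} {hk : k + 1 < n} {i j : Fin n} {w₀ : Equiv.Perm (Fin n)}
    (h₀ : IsTau k hk i j w₀) (w : Equiv.Perm (Fin n)) : IsTau k hk i j w ↔ w = w₀ :=
  ⟨fun hw ↦ hw.eq h₀, fun hw ↦ hw ▸ h₀⟩

theorem val_sT_apply {n l : ℕ} (h : l + 1 < n) (x : Fin n) :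
    (sT n l x : ℕ) = if (x : ℕ) = l then l + 1 else if (x : ℕ) = l + 1 then l else x := by
  rw [sT, dif_pos h, Equiv.swap_apply_def]
  split_ifs <;> simp_all [Fin.ext_iff]

theorem val_prod_map_sT_range'_apply {n a m : ℕ} (h : a + m < n) (x : Fin n) :
    ((((List.range' a m).map (sT n)).prod x : Fin n) : ℕ) =
      if (x : ℕ) < a then (x : ℕ) else if (x : ℕ) < a + m then (x : ℕ) + 1
      else if (x : ℕ) = a + m then a else (x : ℕ) := by
  induction m generalizing x with
  | zero =>
    simp only [List.range'_zero, List.map_nil, List.prod_nil, Equiv.Perm.one_apply, add_zero]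
    split_ifs <;> omega
  | succ m ih =>
    rw [List.range'_concat, List.map_append, List.prod_append, List.map_singleton,
      List.prod_singleton, one_mul, Equiv.Perm.mul_apply, ih (by omega), val_sT_apply (by omega)]
    split_ifs <;> omega

theorem val_prod_map_sT_reverse_range'_apply {n b m : ℕ} (h : b + m < n) (x : Fin n) :
    ((((List.range' b m).reverse.map (sT n)).prod x : Fin n) : ℕ) =
      if (x : ℕ) < b then (x : ℕ) else if (x : ℕ) = b then b + m
      else if (x : ℕ) ≤ b + m then (x : ℕ) - 1 else (x : ℕ) := by
  induction m generalizing x with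
  | zero =>
    simp only [List.range'_zero, List.reverse_nil, List.map_nil, List.prod_nil,
      Equiv.Perm.one_apply, add_zero]
    split_ifs <;> omega
  | succ m ih =>
    rw [List.range'_concat, List.reverse_append, List.map_append, List.prod_append,
      List.reverse_singleton, List.map_singleton, List.prod_singleton, one_mul,
      Equiv.Perm.mul_apply, val_sT_apply (by omega), ih (by omega)]
    split_ifs <;> omega

theorem isTau_descProd_mul_ascProd {n k i j : ℕ} (hik : i < k) (hkj : k + 1 < j) (hk : k + 1 < n)
    (hi : i < n) (hj : j < n) :
    IsTau k hk ⟨i, hi⟩ ⟨j, hj⟩ (descProd n (k - 1) i * ascProd n (k + 1) (j - 1)) := by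
  have hval (x : Fin n) : ((descProd n (k - 1) i * ascProd n (k + 1) (j - 1)) x : ℕ) =
      if (x : ℕ) = i then k else if (x : ℕ) = j then k + 1
      else if (x : ℕ) < i ∨ j < x then x else if (x : ℕ) ≤ k then (x : ℕ) - 1
      else (x : ℕ) + 1 := by
    rw [Equiv.Perm.mul_apply, descProd, ascProd, val_prod_map_sT_reverse_range'_apply (by omega),
      val_prod_map_sT_range'_apply (by omega)]
    split_ifs <;> omega
  refine ⟨Fin.ext ?_, Fin.ext ?_, fun s t hst hsi hsj hti htj ↦ ?_⟩
  · rw [hval, if_pos rfl]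
  · rw [hval, if_neg (show j ≠ i by omega), if_pos rfl]
  · simp only [ne_eq, Fin.ext_iff, Fin.lt_def] at hst hsi hsj hti htj ⊢
    rw [hval, hval]
    split_ifs <;> omega

/-- For `i < k` and `k+1 < j ≤ n-1`:
`τ^{n,k}_{i,j} = (s_{k-1} s_{k-2} ⋯ s_i) ∘ (s_{k+1} s_{k+2} ⋯ s_{j-1})`. -/
theorem stmt7 (n k i j : ℕ) (hik : i < k) (hkj : k + 1 < j) (hj : j < n) :
    ∀ w : Equiv.Perm (Fin n),
      IsTau k (by omega) ⟨i, by omega⟩ ⟨j, hj⟩ w ↔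
        w = descProd n (k - 1) i * ascProd n (k + 1) (j - 1) := by
  exact (isTau_descProd_mul_ascProd hik hkj _ _ hj).iff_eq
end

section
/- Let n ≥ 2 and let k, j satisfy 1 ≤ k and k+2 ≤ j ≤ n. Set τ = s_{k+1} s_{k+2} ⋯ s_{j−1} ∈ S_n. Then for every m with k ≤ m ≤ j−1, the bigrassmannian element u_m = s_k s_{k+1} ⋯ s_m satisfies u_m ≤_B s_k ∘ τ and ¬(u_m ≤_B τ); in particular, the Bruhat complement [e, s_k τ] \ [e, τ] contains at least two bigrassmannian elements, and these elements have pairwise different right descents. -/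
/-- The Bruhat order on `S_n` via the rank-matrix criterion:
`u ≤_B w` iff for all `p q`, `#{i ≤ p : u i ≥ q} ≤ #{i ≤ p : w i ≥ q}`. -/
def bruhatLE {n : ℕ} (u w : Equiv.Perm (Fin n)) : Prop :=
  ∀ p q : Fin n,
    (Finset.univ.filter (fun i : Fin n => i ≤ p ∧ q ≤ u i)).card ≤
      (Finset.univ.filter (fun i : Fin n => i ≤ p ∧ q ≤ w i)).card

/-- The set of right descents of a permutation: positions `l` with `w(l) > w(l+1)`. -/
def rightDescents {n : ℕ} (w : Equiv.Perm (Fin n)) : Set ℕ :=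
  {l | ∃ h : l + 1 < n, w ⟨l + 1, h⟩ < w ⟨l, Nat.lt_of_succ_lt h⟩}

/-!
`u_m = s_k ⋯ s_m` is the cycle sending `i ↦ i + 1` on `[k, m]` and `m + 1 ↦ k`. Since `u_m` has
no inversion at position `m + 1`, `u_m < u_m s_{m+1} = u_{m+1}`, so the `u_m` form a Bruhat chain
ending at `u_{j-1} = s_k τ`. On the other hand `u_m(k) = k + 1` while `τ` fixes `{0, …, k}`, so the
rank-matrix entry at `(p, q) = (k, k + 1)` is `1` for `u_m` and `0` for `τ`. Finally the only right
descent of `u_m` is `m`.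
-/

lemma sT_apply_val {n l : ℕ} (h : l + 1 < n) (i : Fin n) :
    (sT n l i : ℕ) = if (i : ℕ) = l then l + 1 else if (i : ℕ) = l + 1 then l else (i : ℕ) := by
  rw [sT, dif_pos h, Equiv.swap_apply_def]
  split_ifs <;> simp_all [Fin.ext_iff]

lemma sT_apply_sT (n l : ℕ) (i : Fin n) : sT n l (sT n l i) = i := by
  unfold sT
  split_ifs
  · exact Equiv.swap_apply_self _ _ _
  · rfl

lemma ascProd_of_lt {n a b : ℕ} (h : b < a) : ascProd n a b = 1 := by
  rw [ascProd, Nat.sub_eq_zero_of_le h]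
  rfl

lemma ascProd_eq_sT_mul {n a b : ℕ} (hab : a ≤ b) :
    ascProd n a b = sT n a * ascProd n (a + 1) b := by
  rw [ascProd, ascProd, show b + 1 - a = (b - a) + 1 by omega,
    show b + 1 - (a + 1) = b - a by omega, List.range'_succ, List.map_cons, List.prod_cons]

lemma ascProd_succ {n a b : ℕ} (hab : a ≤ b + 1) :
    ascProd n a (b + 1) = ascProd n a b * sT n (b + 1) := by
  rw [ascProd, ascProd, show b + 1 + 1 - a = (b + 1 - a) + 1 by omega, List.range'_concat,
    List.map_append, List.prod_append, one_mul, show a + (b + 1 - a) = b + 1 by omega,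
    List.map_singleton, List.prod_singleton]

lemma ascProd_self (n a : ℕ) : ascProd n a a = sT n a := by
  rw [ascProd_eq_sT_mul le_rfl, ascProd_of_lt (Nat.lt_succ_self a), mul_one]

lemma ascProd_apply_val {n a b : ℕ} (hab : a ≤ b) (hb : b + 1 < n) (i : Fin n) :
    (ascProd n a b i : ℕ) =
      if (i : ℕ) < a then (i : ℕ) else if (i : ℕ) ≤ b then (i : ℕ) + 1
      else if (i : ℕ) = b + 1 then a else (i : ℕ) := by
  induction b, hab using Nat.le_induction generalizing i with
  | base =>
    rw [ascProd_self, sT_apply_val hb]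
    split_ifs <;> omega
  | succ b hab ih =>
    rw [ascProd_succ (by omega), Equiv.Perm.mul_apply, ih (by omega), sT_apply_val hb]
    split_ifs <;> omega

lemma ascProd_apply_of_lt {n a b : ℕ} (hb : b + 1 < n) {i : Fin n} (hi : (i : ℕ) < a) :
    ascProd n a b i = i := by
  rcases le_or_gt a b with hab | hba
  · exact Fin.ext (by rw [ascProd_apply_val hab hb, if_pos hi])
  · rw [ascProd_of_lt hba, Equiv.Perm.one_apply]

lemma bruhatLE_refl {n : ℕ} (u : Equiv.Perm (Fin n)) : bruhatLE u u :=
  fun _ _ => le_rfl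

lemma bruhatLE_trans {n : ℕ} {u v w : Equiv.Perm (Fin n)}
    (huv : bruhatLE u v) (hvw : bruhatLE v w) : bruhatLE u w :=
  fun p q => (huv p q).trans (hvw p q)

lemma bruhatLE_mul_sT {n l : ℕ} (u : Equiv.Perm (Fin n)) (h : l + 1 < n)
    (hle : u ⟨l, Nat.lt_of_succ_lt h⟩ ≤ u ⟨l + 1, h⟩) : bruhatLE u (u * sT n l) := by
  intro p q
  by_cases hp : (p : ℕ) = l
  · -- at `p = l` the identity is an injection: only `i = l` changes, and `u (l + 1) ≥ u l`
    refine Finset.card_le_card fun i hi => ?_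
    simp only [Finset.mem_filter, Finset.mem_univ, true_and] at hi ⊢
    obtain ⟨hip, hqi⟩ := hi
    refine ⟨hip, ?_⟩
    rw [Equiv.Perm.mul_apply]
    rw [Fin.le_def] at hip
    by_cases hil : (i : ℕ) = l
    · have hi : i = ⟨l, Nat.lt_of_succ_lt h⟩ := Fin.ext hil
      have hsi : sT n l i = ⟨l + 1, h⟩ := Fin.ext (by rw [sT_apply_val h]; simp [hil])
      rw [hsi]
      exact hqi.trans (hi ▸ hle)
    · have hsi : sT n l i = i := Fin.ext (by rw [sT_apply_val h]; split_ifs <;> omega)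
      rwa [hsi]
  · -- otherwise `{i ≤ p}` is stable under `s_l`, which is then the injection
    refine Finset.card_le_card_of_injOn (sT n l) ?_ (sT n l).injective.injOn
    intro i hi
    simp only [Finset.mem_coe, Finset.mem_filter, Finset.mem_univ, true_and] at hi ⊢
    obtain ⟨hip, hqi⟩ := hi
    refine ⟨?_, by rwa [Equiv.Perm.mul_apply, sT_apply_sT]⟩
    rw [Fin.le_def] at hip ⊢
    rw [sT_apply_val h]
    split_ifs <;> omega

lemma bruhatLE_ascProd_succ {n a b : ℕ} (hab : a ≤ b) (hb : b + 2 < n) :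
    bruhatLE (ascProd n a b) (ascProd n a (b + 1)) := by
  rw [ascProd_succ (by omega)]
  refine bruhatLE_mul_sT _ hb ?_
  rw [Fin.le_def, ascProd_apply_val hab (by omega), ascProd_apply_val hab (by omega)]
  dsimp only
  split_ifs <;> omega

lemma bruhatLE_ascProd_of_le {n a b c : ℕ} (hab : a ≤ b) (hbc : b ≤ c) (hc : c + 1 < n) :
    bruhatLE (ascProd n a b) (ascProd n a c) := by
  induction c, hbc using Nat.le_induction with
  | base => exact bruhatLE_refl _
  | succ c hbc ih => exact bruhatLE_trans (ih (by omega)) (bruhatLE_ascProd_succ (by omega) hc)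

lemma not_bruhatLE_ascProd_succ {n a b c : ℕ} (hab : a ≤ b) (hb : b + 1 < n) (hc : c + 1 < n) :
    ¬ bruhatLE (ascProd n a b) (ascProd n (a + 1) c) := by
  intro hle
  have hrank := hle ⟨a, by omega⟩ ⟨a + 1, by omega⟩
  have hpos : 0 < (Finset.univ.filter fun i : Fin n =>
      i ≤ ⟨a, by omega⟩ ∧ (⟨a + 1, by omega⟩ : Fin n) ≤ ascProd n a b i).card := by
    refine Finset.card_pos.mpr ⟨⟨a, by omega⟩, ?_⟩
    simp only [Finset.mem_filter, Finset.mem_univ, true_and, le_refl, Fin.le_def,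
      ascProd_apply_val hab hb]
    split_ifs <;> omega
  have hzero : (Finset.univ.filter fun i : Fin n =>
      i ≤ ⟨a, by omega⟩ ∧ (⟨a + 1, by omega⟩ : Fin n) ≤ ascProd n (a + 1) c i).card = 0 := by
    refine Finset.card_eq_zero.mpr (Finset.filter_eq_empty_iff.mpr ?_)
    rintro i - ⟨hia, hi⟩
    rw [ascProd_apply_of_lt hc (Nat.lt_succ_of_le hia)] at hi
    exact absurd (hi.trans hia) (by simp [Fin.le_def])
  omega

lemma rightDescents_ascProd {n a b : ℕ} (hab : a ≤ b) (hb : b + 1 < n) :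
    rightDescents (ascProd n a b) = {b} := by
  ext l
  simp only [rightDescents, Set.mem_ofPred_eq, Set.mem_singleton_iff, Fin.lt_def,
    ascProd_apply_val hab hb]
  constructor
  · rintro ⟨-, hlt⟩
    split_ifs at hlt <;> omega
  · rintro rfl
    exact ⟨hb, by split_ifs <;> omega⟩

theorem stmt9_general (n k j : ℕ) (hkj : k + 2 ≤ j) (hj : j < n) :
    (∀ m : ℕ, k ≤ m → m ≤ j - 1 →
      bruhatLE (ascProd n k m) (sT n k * ascProd n (k + 1) (j - 1)) ∧
      ¬ bruhatLE (ascProd n k m) (ascProd n (k + 1) (j - 1))) ∧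
    (∀ m m' : ℕ, k ≤ m → m ≤ j - 1 → k ≤ m' → m' ≤ j - 1 → m ≠ m' →
      rightDescents (ascProd n k m) ≠ rightDescents (ascProd n k m')) := by
  refine ⟨fun m hkm hmj => ⟨?_, not_bruhatLE_ascProd_succ hkm (by omega) (by omega)⟩,
    fun m m' hkm hmj hkm' hmj' hne => ?_⟩
  · rw [← ascProd_eq_sT_mul (by omega)]
    exact bruhatLE_ascProd_of_le hkm hmj (by omega)
  · rw [rightDescents_ascProd hkm (by omega), rightDescents_ascProd hkm' (by omega)]
    exact fun h => hne (Set.singleton_eq_singleton_iff.mp h)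

/-- For `τ = s_{k+1} ⋯ s_{j-1}` with `j ≥ k+2`: each bigrassmannian element
`u_m = s_k s_{k+1} ⋯ s_m` with `k ≤ m ≤ j-1` lies in the Bruhat interval
`[e, s_k τ]` but not in `[e, τ]`; in particular the Bruhat complement contains at
least two bigrassmannian elements, and they have pairwise different right descents. -/
theorem stmt9 (n k j : ℕ) (hn : 2 ≤ n) (hkj : k + 2 ≤ j) (hj : j < n) :
    (∀ m : ℕ, k ≤ m → m ≤ j - 1 →
      bruhatLE (ascProd n k m) (sT n k * ascProd n (k + 1) (j - 1)) ∧
      ¬ bruhatLE (ascProd n k m) (ascProd n (k + 1) (j - 1))) ∧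
    (∀ m m' : ℕ, k ≤ m → m ≤ j - 1 → k ≤ m' → m' ≤ j - 1 → m ≠ m' →
      rightDescents (ascProd n k m) ≠ rightDescents (ascProd n k m')) :=
  stmt9_general n k j hkj hj
end

section
/- Let n ≥ 2, 1 ≤ k ≤ n−1, and let λ : {1,…,n} → Bool be a word taking the value true at exactly k positions. Then there is exactly one cup diagram M that is oriented for λ and admissible for λ with |M| = min(k, n−k) if and only if either (k ≤ n−k and the set {i : λ(i) = false} consists of consecutive integers) or (n−k ≤ k and the set {i : λ(i) = true} consists of consecutive integers). -/
/-!
An oriented cup diagram with as many cups as there are minority letters `L` matches every `L`,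
so its free positions all carry `!L`, and admissibility is automatic.

If such a diagram is unique, no exchange of cups produces another one: across a gap filled with
cups, two sibling cups, two nested cups, or a cup and a free position must show equal letters.
Hence the cups under any cup form a rainbow `X…X Y…Y`, and an outermost cup with neighbours on
both sides would carry the same letter at both ends. The outermost cups therefore sit at the ends
of the word with only free positions between them, which makes the letters `!L` consecutive, or,
when no position is free, one of the two letters consecutive.

Conversely, if the letters `X` fill a block, the span of a cup contains as many `X` as `!X`,
which pins every cup to one of the two rainbows around the block.
-/

/-- A cup diagram on `{0,…,n-1}`: a finite set `M` of pairs `(i,j)` with `i < j`,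
with pairwise disjoint endpoints, non-crossing, and such that every position
strictly between the endpoints of a cup is itself an endpoint of some cup. -/
def IsCupDiagram {n : ℕ} (M : Finset (Fin n × Fin n)) : Prop :=
  (∀ p ∈ M, p.1 < p.2) ∧
  (∀ p ∈ M, ∀ q ∈ M, p ≠ q →
    p.1 ≠ q.1 ∧ p.1 ≠ q.2 ∧ p.2 ≠ q.1 ∧ p.2 ≠ q.2) ∧
  (∀ p ∈ M, ∀ q ∈ M, ¬(p.1 < q.1 ∧ q.1 < p.2 ∧ p.2 < q.2)) ∧
  (∀ p ∈ M, ∀ l : Fin n, p.1 < l → l < p.2 → ∃ q ∈ M, l = q.1 ∨ l = q.2)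

/-- A position is free if it is not an endpoint of any pair of `M`. -/
def IsFree {n : ℕ} (M : Finset (Fin n × Fin n)) (l : Fin n) : Prop :=
  ∀ p ∈ M, p.1 ≠ l ∧ p.2 ≠ l

/-- `M` is oriented for the word `λ` if the two endpoints of each cup carry
different letters. -/
def OrientedFor {n : ℕ} (lam : Fin n → Bool) (M : Finset (Fin n × Fin n)) : Prop :=
  ∀ p ∈ M, lam p.1 ≠ lam p.2

/-- The degree of `M` for `λ`: the number of cups `(i,j)` with `λ(i) = true`
(clockwise cups). -/
def cupDegree {n : ℕ} (lam : Fin n → Bool) (M : Finset (Fin n × Fin n)) : ℕ :=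
  (M.filter (fun p => lam p.1 = true)).card

/-- `M` is admissible for `λ` if there are no free positions `i < j` with
`λ(i) = false` (`∨`) and `λ(j) = true` (`∧`). -/
def AdmissibleFor {n : ℕ} (lam : Fin n → Bool) (M : Finset (Fin n × Fin n)) : Prop :=
  ∀ i j : Fin n, i < j → IsFree M i → IsFree M j → ¬(lam i = false ∧ lam j = true)

section

variable {n : ℕ}

lemma Fin.exists_val_eq {m : ℕ} (h : m < n) : ∃ i : Fin n, i.val = m := ⟨⟨m, h⟩, rfl⟩

lemma Bool.ne_of_ne_of_ne_of_ne {a b c d : Bool} (h₁ : a ≠ b) (h₂ : b ≠ c) (h₃ : c ≠ d) :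
    a ≠ d := by
  cases a <;> cases b <;> cases c <;> cases d <;> simp_all

def IsEndpoint (M : Finset (Fin n × Fin n)) (l : Fin n) : Prop :=
  ∃ p ∈ M, l = p.1 ∨ l = p.2

instance (M : Finset (Fin n × Fin n)) : DecidablePred (IsEndpoint M) :=
  fun _ => inferInstanceAs (Decidable (∃ p ∈ M, _))

def IsFilledBetween (M : Finset (Fin n × Fin n)) (u v : Fin n) : Prop :=
  ∀ l : Fin n, u < l → l < v → ∃ q ∈ M, (l = q.1 ∨ l = q.2) ∧ u < q.1 ∧ q.2 < v

def IsOutermost (M : Finset (Fin n × Fin n)) (p : Fin n × Fin n) : Prop :=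
  ∀ q ∈ M, ¬(q.1 < p.1 ∧ p.2 < q.2)

lemma isEndpoint_pair {p q : Fin n × Fin n} {l : Fin n} :
    IsEndpoint {p, q} l ↔ l = p.1 ∨ l = p.2 ∨ l = q.1 ∨ l = q.2 := by
  simp [IsEndpoint, or_assoc]

lemma isEndpoint_singleton {p : Fin n × Fin n} {l : Fin n} :
    IsEndpoint {p} l ↔ l = p.1 ∨ l = p.2 := by
  simp [IsEndpoint]

lemma not_isFree_iff {M : Finset (Fin n × Fin n)} {l : Fin n} :
    ¬ IsFree M l ↔ IsEndpoint M l := by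
  simp only [IsFree, IsEndpoint, not_forall, not_and_or, not_not, exists_prop]
  exact exists_congr fun p => and_congr_right fun _ => by tauto

lemma isFilledBetween_of_succ (M : Finset (Fin n × Fin n)) {u v : Fin n}
    (h : u.val + 1 = v.val) : IsFilledBetween M u v := by
  intro l h1 h2
  omega

namespace IsCupDiagram

variable {M : Finset (Fin n × Fin n)} (hM : IsCupDiagram M)
include hM

lemma lt {p : Fin n × Fin n} (hp : p ∈ M) : p.1 < p.2 := hM.1 p hp

lemma eq_of_endpoint {p q : Fin n × Fin n} (hp : p ∈ M) (hq : q ∈ M) {l : Fin n}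
    (hlp : l = p.1 ∨ l = p.2) (hlq : l = q.1 ∨ l = q.2) : p = q := by
  by_contra hne
  have := hM.2.1 p hp q hq hne
  rcases hlp with rfl | rfl <;> rcases hlq with h | h <;> tauto

lemma inside_of_mem_Ioo {p q : Fin n × Fin n} (hp : p ∈ M) (hq : q ∈ M) {l : Fin n}
    (hl : l = q.1 ∨ l = q.2) (h1 : p.1 < l) (h2 : l < p.2) : p.1 < q.1 ∧ q.2 < p.2 := by
  have hpq : p ≠ q := by rintro rfl; omega
  have := hM.2.1 p hp q hq hpq
  have := hM.2.2.1 p hp q hq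
  have := hM.2.2.1 q hq p hp
  have := hM.lt hq
  omega

lemma isFilledBetween {p : Fin n × Fin n} (hp : p ∈ M) : IsFilledBetween M p.1 p.2 := by
  intro l h1 h2
  obtain ⟨q, hq, hl⟩ := hM.2.2.2 p hp l h1 h2
  exact ⟨q, hq, hl, hM.inside_of_mem_Ioo hp hq hl h1 h2⟩

lemma exists_of_mem_Icc {p : Fin n × Fin n} (hp : p ∈ M) {l : Fin n}
    (h1 : p.1 ≤ l) (h2 : l ≤ p.2) :
    ∃ q ∈ M, (l = q.1 ∨ l = q.2) ∧ p.1 ≤ q.1 ∧ q.2 ≤ p.2 := by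
  rcases h1.eq_or_lt with rfl | h1
  · exact ⟨p, hp, Or.inl rfl, le_rfl, le_rfl⟩
  rcases h2.eq_or_lt with rfl | h2
  · exact ⟨p, hp, Or.inr rfl, le_rfl, le_rfl⟩
  obtain ⟨q, hq, hl, hq1, hq2⟩ := hM.isFilledBetween hp l h1 h2
  exact ⟨q, hq, hl, hq1.le, hq2.le⟩

lemma isEndpoint_of_mem_Icc {p : Fin n × Fin n} (hp : p ∈ M) {l : Fin n}
    (h1 : p.1 ≤ l) (h2 : l ≤ p.2) : IsEndpoint M l := by
  obtain ⟨q, hq, hl, -⟩ := hM.exists_of_mem_Icc hp h1 h2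
  exact ⟨q, hq, hl⟩

lemma snd_le_of_mem_Icc {p q : Fin n × Fin n} (hp : p ∈ M) (hq : q ∈ M)
    (h1 : p.1 ≤ q.1) (h2 : q.1 ≤ p.2) : q.2 ≤ p.2 := by
  rcases h1.eq_or_lt with h1 | h1
  · rw [hM.eq_of_endpoint hp hq (Or.inl rfl) (Or.inl h1)]
  rcases h2.eq_or_lt with h2 | h2
  · have := hM.eq_of_endpoint hp hq (Or.inr h2) (Or.inl rfl)
    subst this; exact le_rfl
  exact (hM.inside_of_mem_Ioo hp hq (Or.inl rfl) h1 h2).2.le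

lemma isFilledBetween_of_mem {p : Fin n × Fin n} (hp : p ∈ M) {u v : Fin n}
    (hu : u.val + 1 = p.1.val) (hv : p.2.val + 1 = v.val) : IsFilledBetween M u v := by
  intro l h1 h2
  obtain ⟨q, hq, hl, hq1, hq2⟩ := hM.exists_of_mem_Icc hp (l := l) (by omega) (by omega)
  exact ⟨q, hq, hl, by omega, by omega⟩

lemma disjoint_or_nested {e p : Fin n × Fin n} (he : e ∈ M) (hp : p ∈ M) (hne : e ≠ p) :
    e.2 < p.1 ∨ p.2 < e.1 ∨ (e.1 < p.1 ∧ p.2 < e.2) ∨ (p.1 < e.1 ∧ e.2 < p.2) := by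
  have := hM.2.1 e he p hp hne
  have := hM.2.2.1 e he p hp
  have := hM.2.2.1 p hp e he
  have := hM.lt he
  have := hM.lt hp
  omega

lemma not_mem_Icc_of_isFree {g : Fin n} (hg : IsFree M g) {e : Fin n × Fin n} (he : e ∈ M) :
    g < e.1 ∨ e.2 < g := by
  by_contra! h
  exact not_isFree_iff.2 (hM.isEndpoint_of_mem_Icc he h.1 h.2) hg

lemma exists_outermost {l : Fin n} (hl : IsEndpoint M l) :
    ∃ O ∈ M, O.1 ≤ l ∧ l ≤ O.2 ∧ IsOutermost M O := by
  have hne : (M.filter fun c => c.1 ≤ l ∧ l ≤ c.2).Nonempty := by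
    obtain ⟨c, hc, hlc⟩ := hl
    have := hM.lt hc
    exact ⟨c, Finset.mem_filter.2 ⟨hc, by omega⟩⟩
  obtain ⟨O, hO, hmin⟩ := Finset.exists_min_image _ (fun c => c.1) hne
  rw [Finset.mem_filter] at hO
  refine ⟨O, hO.1, hO.2.1, hO.2.2, fun e he ⟨h1, h2⟩ => ?_⟩
  have := hmin e (Finset.mem_filter.2 ⟨he, by omega⟩)
  exact absurd h1 (not_lt.2 this)

lemma isFree_or_exists_right {O : Fin n × Fin n} (hO : O ∈ M) (hout : IsOutermost M O)
    {b : Fin n} (hb : O.2.val + 1 = b.val) :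
    IsFree M b ∨ ∃ d, (b, d) ∈ M ∧ IsOutermost M (b, d) := by
  by_cases hfree : IsFree M b
  · exact Or.inl hfree
  obtain ⟨q, hq, hbq⟩ := not_isFree_iff.1 hfree
  have := hM.lt hq
  have := hM.lt hO
  have hqO : q ≠ O := by rintro rfl; omega
  have := hM.disjoint_or_nested hq hO hqO
  have := hout q hq
  obtain rfl : b = q.1 := hbq.resolve_right (by omega)
  refine Or.inr ⟨q.2, hq, fun e he ⟨he₁, he₂⟩ => ?_⟩
  have heO : e ≠ O := by rintro rfl; dsimp only at he₂; omega
  have := hM.disjoint_or_nested he hO heO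
  have := hout e he
  dsimp only at he₁ he₂; omega

lemma isFree_or_exists_left {O : Fin n × Fin n} (hO : O ∈ M) (hout : IsOutermost M O)
    {a : Fin n} (ha : a.val + 1 = O.1.val) :
    IsFree M a ∨ ∃ c, (c, a) ∈ M ∧ IsOutermost M (c, a) := by
  by_cases hfree : IsFree M a
  · exact Or.inl hfree
  obtain ⟨q, hq, haq⟩ := not_isFree_iff.1 hfree
  have := hM.lt hq
  have := hM.lt hO
  have hqO : q ≠ O := by rintro rfl; omega
  have := hM.disjoint_or_nested hq hO hqO
  have := hout q hq
  obtain rfl : a = q.2 := haq.resolve_left (by omega)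
  refine Or.inr ⟨q.1, hq, fun e he ⟨he₁, he₂⟩ => ?_⟩
  have heO : e ≠ O := by rintro rfl; dsimp only at he₁; omega
  have := hM.disjoint_or_nested he hO heO
  have := hout e he
  dsimp only at he₁ he₂; omega

lemma isEndpoint_of_cover {p q : Fin n × Fin n} (hp : p ∈ M) (hq : q ∈ M) (h₀ : p.1.val = 0)
    (h₁ : p.2.val + 1 = q.1.val) (h₂ : q.2.val + 1 = n) (l : Fin n) : IsEndpoint M l := by
  by_cases hl : l ≤ p.2
  · exact hM.isEndpoint_of_mem_Icc hp (by omega) hl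
  · exact hM.isEndpoint_of_mem_Icc hq (by omega) (by omega)

end IsCupDiagram

lemma IsFilledBetween.inside {M : Finset (Fin n × Fin n)} {u v : Fin n}
    (hW : IsFilledBetween M u v) (hM : IsCupDiagram M) {e : Fin n × Fin n} (he : e ∈ M)
    {l : Fin n} (hl : l = e.1 ∨ l = e.2) (h1 : u < l) (h2 : l < v) : u < e.1 ∧ e.2 < v := by
  obtain ⟨q, hq, hlq, hq1, hq2⟩ := hW l h1 h2
  rw [hM.eq_of_endpoint he hq hl hlq]
  exact ⟨hq1, hq2⟩

lemma IsFilledBetween.inside_or_outside {M : Finset (Fin n × Fin n)} {u v : Fin n}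
    (hW : IsFilledBetween M u v) (hM : IsCupDiagram M) {e : Fin n × Fin n} (he : e ∈ M) :
    (u < e.1 ∧ e.2 < v) ∨ ((e.1 ≤ u ∨ v ≤ e.1) ∧ (e.2 ≤ u ∨ v ≤ e.2)) := by
  by_cases h1 : u < e.1 ∧ e.1 < v
  · exact Or.inl (hW.inside hM he (Or.inl rfl) h1.1 h1.2)
  by_cases h2 : u < e.2 ∧ e.2 < v
  · exact Or.inl (hW.inside hM he (Or.inr rfl) h2.1 h2.2)
  right; omega

/-! ### Counting letters -/

namespace IsCupDiagram

variable {M : Finset (Fin n × Fin n)} {lam : Fin n → Bool}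
  (hM : IsCupDiagram M) (hOr : OrientedFor lam M)
include hM hOr

/-- Each cup has exactly one endpoint carrying a given letter. -/
lemma card_eq_card_filter_isEndpoint {S : Finset (Fin n × Fin n)} (hS : S ⊆ M) (X : Bool) :
    S.card = (Finset.univ.filter fun l => lam l = X ∧ IsEndpoint S l).card := by
  apply Finset.card_bij (fun p _ => if lam p.1 = X then p.1 else p.2)
  · intro p hp
    have := hOr p (hS hp)
    split_ifs with h
    · simpa using ⟨h, p, hp, Or.inl rfl⟩
    · simpa using ⟨by cases X <;> simp_all, p, hp, Or.inr rfl⟩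
  · intro p hp q hq heq
    apply hM.eq_of_endpoint (hS hp) (hS hq) (l := if lam p.1 = X then p.1 else p.2)
    · split_ifs <;> simp
    · rw [heq]; split_ifs <;> simp
  · intro l hl
    simp only [Finset.mem_filter, Finset.mem_univ, true_and] at hl
    obtain ⟨hlX, q, hq, rfl | rfl⟩ := hl
    · exact ⟨q, hq, if_pos hlX⟩
    · have := hOr q (hS hq)
      exact ⟨q, hq, if_neg (by rwa [hlX] at this)⟩

lemma isEndpoint_of_card_eq {X : Bool}
    (hcard : M.card = (Finset.univ.filter fun l => lam l = X).card) {l : Fin n}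
    (hl : lam l = X) : IsEndpoint M l := by
  have hsub : (Finset.univ.filter fun l => lam l = X ∧ IsEndpoint M l) ⊆
      Finset.univ.filter fun l => lam l = X :=
    fun l => by simp only [Finset.mem_filter]; exact fun h => ⟨h.1, h.2.1⟩
  have heq := Finset.eq_of_subset_of_card_le hsub
    (by rw [← hcard, ← hM.card_eq_card_filter_isEndpoint hOr le_rfl X])
  have : l ∈ Finset.univ.filter fun l => lam l = X := by simpa using hl
  rw [← heq] at this
  exact (Finset.mem_filter.1 this).2.2

lemma card_filter_Icc {p : Fin n × Fin n} (hp : p ∈ M) (X : Bool) :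
    ((Finset.Icc p.1 p.2).filter fun l => lam l = X).card =
      (M.filter fun q => p.1 ≤ q.1 ∧ q.2 ≤ p.2).card := by
  rw [hM.card_eq_card_filter_isEndpoint hOr (Finset.filter_subset _ M) X]
  congr 1
  ext l
  simp only [Finset.mem_filter, Finset.mem_Icc, Finset.mem_univ, true_and, IsEndpoint]
  constructor
  · rintro ⟨⟨h1, h2⟩, hX⟩
    obtain ⟨q, hq, hl, hq1, hq2⟩ := hM.exists_of_mem_Icc hp h1 h2
    exact ⟨hX, q, ⟨hq, hq1, hq2⟩, hl⟩
  · rintro ⟨hX, q, ⟨hq, hq1, hq2⟩, hl⟩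
    have := hM.lt hq
    exact ⟨by omega, hX⟩

end IsCupDiagram

lemma card_filter_add_card_filter_not (lam : Fin n → Bool) (X : Bool) :
    (Finset.univ.filter fun l => lam l = X).card +
      (Finset.univ.filter fun l => lam l = !X).card = n := by
  simpa [Bool.eq_not_iff] using
    Finset.card_filter_add_card_filter_not (s := Finset.univ) fun l => lam l = X

lemma IsCupDiagram.card_eq_of_forall_isEndpoint {M : Finset (Fin n × Fin n)}
    {lam : Fin n → Bool} (hM : IsCupDiagram M) (hOr : OrientedFor lam M) {X : Bool}
    (h : ∀ l, lam l = X → IsEndpoint M l) :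
    M.card = (Finset.univ.filter fun l => lam l = X).card := by
  rw [hM.card_eq_card_filter_isEndpoint hOr le_rfl X]
  congr 1
  ext l
  simp only [Finset.mem_filter, Finset.mem_univ, true_and, and_iff_left_iff_imp]
  exact h l

lemma IsCupDiagram.lam_eq_not_of_isFree {M : Finset (Fin n × Fin n)} {lam : Fin n → Bool}
    (hM : IsCupDiagram M) (hOr : OrientedFor lam M) {L : Bool}
    (hcard : M.card = (Finset.univ.filter fun l => lam l = L).card) {l : Fin n}
    (hl : IsFree M l) : lam l = !L :=
  Bool.eq_not_iff.2 fun h => not_isFree_iff.2 (hM.isEndpoint_of_card_eq hOr hcard h) hl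

/-! ### Exchanging cups -/

lemma IsCupDiagram.sdiff_union {M R A : Finset (Fin n × Fin n)} (hM : IsCupDiagram M)
    (hR : R ⊆ M)
    (hA_lt : ∀ p ∈ A, p.1 < p.2)
    (hA_disj : ∀ p ∈ A, ∀ q ∈ A, p ≠ q → p.1 ≠ q.1 ∧ p.1 ≠ q.2 ∧ p.2 ≠ q.1 ∧ p.2 ≠ q.2)
    (hA_nc : ∀ p ∈ A, ∀ q ∈ A, ¬(p.1 < q.1 ∧ q.1 < p.2 ∧ p.2 < q.2))
    (hA_end : ∀ p ∈ A, ∀ l, (l = p.1 ∨ l = p.2) → IsEndpoint R l ∨ IsFree M l)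
    (hA_fill : ∀ p ∈ A, ∀ l, p.1 < l → l < p.2 → IsEndpoint M l)
    (hR_end : ∀ r ∈ R, ∀ l, (l = r.1 ∨ l = r.2) →
      IsEndpoint A l ∨ ∀ e ∈ M \ R ∪ A, ¬(e.1 < l ∧ l < e.2))
    (hsep : ∀ e ∈ M \ R, ∀ p ∈ A,
      ¬(e.1 < p.1 ∧ p.1 < e.2 ∧ e.2 < p.2) ∧ ¬(p.1 < e.1 ∧ e.1 < p.2 ∧ p.2 < e.2)) :
    IsCupDiagram (M \ R ∪ A) := by
  have hshare : ∀ e ∈ M \ R, ∀ p ∈ A, ∀ l, (l = e.1 ∨ l = e.2) → (l = p.1 ∨ l = p.2) → False := by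
    intro e he p hp l hle hlp
    rw [Finset.mem_sdiff] at he
    rcases hA_end p hp l hlp with ⟨r, hr, hlr⟩ | hfree
    · exact he.2 (hM.eq_of_endpoint he.1 (hR hr) hle hlr ▸ hr)
    · exact not_isFree_iff.2 ⟨e, he.1, hle⟩ hfree
  refine ⟨?_, ?_, ?_, ?_⟩
  · intro p hp
    rcases Finset.mem_union.1 hp with hp | hp
    · exact hM.lt (Finset.mem_sdiff.1 hp).1
    · exact hA_lt p hp
  · intro p hp q hq hpq
    rcases Finset.mem_union.1 hp with hp | hp <;> rcases Finset.mem_union.1 hq with hq | hq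
    · exact hM.2.1 p (Finset.mem_sdiff.1 hp).1 q (Finset.mem_sdiff.1 hq).1 hpq
    · exact ⟨fun h => hshare p hp q hq _ (Or.inl rfl) (Or.inl h),
        fun h => hshare p hp q hq _ (Or.inl rfl) (Or.inr h),
        fun h => hshare p hp q hq _ (Or.inr rfl) (Or.inl h),
        fun h => hshare p hp q hq _ (Or.inr rfl) (Or.inr h)⟩
    · exact ⟨fun h => hshare q hq p hp _ (Or.inl rfl) (Or.inl h.symm),
        fun h => hshare q hq p hp _ (Or.inr rfl) (Or.inl h.symm),
        fun h => hshare q hq p hp _ (Or.inl rfl) (Or.inr h.symm),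
        fun h => hshare q hq p hp _ (Or.inr rfl) (Or.inr h.symm)⟩
    · exact hA_disj p hp q hq hpq
  · intro p hp q hq
    rcases Finset.mem_union.1 hp with hp | hp <;> rcases Finset.mem_union.1 hq with hq | hq
    · exact hM.2.2.1 p (Finset.mem_sdiff.1 hp).1 q (Finset.mem_sdiff.1 hq).1
    · exact (hsep p hp q hq).1
    · exact (hsep q hq p hp).2
    · exact hA_nc p hp q hq
  · intro p hp l h1 h2
    have hl : IsEndpoint M l := by
      rcases Finset.mem_union.1 hp with hp' | hp'
      · exact hM.2.2.2 p (Finset.mem_sdiff.1 hp').1 l h1 h2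
      · exact hA_fill p hp' l h1 h2
    obtain ⟨q, hq, hlq⟩ := hl
    by_cases hqR : q ∈ R
    · rcases hR_end q hqR l hlq with ⟨q', hq', hlq'⟩ | hout
      · exact ⟨q', Finset.mem_union_right _ hq', hlq'⟩
      · exact (hout p hp ⟨h1, h2⟩).elim
    · exact ⟨q, Finset.mem_union_left _ (Finset.mem_sdiff.2 ⟨hq, hqR⟩), hlq⟩

def IsRigid (lam : Fin n → Bool) (M : Finset (Fin n × Fin n)) : Prop :=
  ∀ M' : Finset (Fin n × Fin n), IsCupDiagram M' → OrientedFor lam M' → M'.card = M.card → M' = M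

lemma IsRigid.false_of_exchange {lam : Fin n → Bool} {M R A : Finset (Fin n × Fin n)}
    (hRig : IsRigid lam M) (hOr : OrientedFor lam M) (hR : R ⊆ M) (hAM : Disjoint A M)
    (hA : A.Nonempty) (hcard : A.card = R.card) (hOrA : OrientedFor lam A)
    (hM' : IsCupDiagram (M \ R ∪ A)) : False := by
  have hOr' : OrientedFor lam (M \ R ∪ A) := by
    intro p hp
    rcases Finset.mem_union.1 hp with hp | hp
    · exact hOr p (Finset.mem_sdiff.1 hp).1
    · exact hOrA p hp
  have hcard' : (M \ R ∪ A).card = M.card := by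
    rw [Finset.card_union_of_disjoint (Finset.disjoint_of_subset_left Finset.sdiff_subset
      hAM.symm), Finset.card_sdiff_of_subset hR, hcard]
    have := Finset.card_le_card hR
    omega
  obtain ⟨p, hp⟩ := hA
  have := hRig _ hM' hOr' hcard'
  exact Finset.disjoint_left.1 hAM hp (this ▸ Finset.mem_union_right _ hp)

/-! ### Rigid diagrams -/

namespace IsRigid

variable {lam : Fin n → Bool} {M : Finset (Fin n × Fin n)} (hRig : IsRigid lam M)
  (hM : IsCupDiagram M) (hOr : OrientedFor lam M)
include hRig hM hOr

/-- Otherwise `(a, b), (c, d)` could be replaced by `(b, c), (a, d)`. -/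
lemma lam_eq_of_sibling {a b c d : Fin n} (hab : (a, b) ∈ M) (hcd : (c, d) ∈ M) (hbc : b < c)
    (hW : IsFilledBetween M b c) : lam b = lam c := by
  by_contra hL
  have h₁ := hM.lt hab
  have h₂ := hM.lt hcd
  dsimp only at h₁ h₂
  have hR : {(a, b), (c, d)} ⊆ M := by simp [Finset.insert_subset_iff, hab, hcd]
  refine hRig.false_of_exchange hOr (A := {(b, c), (a, d)}) hR ?_
    (Finset.insert_nonempty _ _) ?_ ?_ ?_
  · simp only [Finset.disjoint_left, Finset.mem_insert, Finset.mem_singleton]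
    rintro p (rfl | rfl) hp
    · have := hM.eq_of_endpoint hp hab (Or.inl rfl) (Or.inr rfl)
      simp only [Prod.ext_iff] at this; omega
    · have := hM.eq_of_endpoint hp hab (Or.inl rfl) (Or.inl rfl)
      simp only [Prod.ext_iff] at this; omega
  · rw [Finset.card_pair, Finset.card_pair] <;> simp only [ne_eq, Prod.ext_iff] <;> omega
  · intro p hp
    simp only [Finset.mem_insert, Finset.mem_singleton] at hp
    rcases hp with rfl | rfl
    · exact hL
    · exact Bool.ne_of_ne_of_ne_of_ne (hOr (a, b) hab) hL (hOr (c, d) hcd)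
  apply hM.sdiff_union hR
  · simp only [Finset.mem_insert, Finset.mem_singleton]
    rintro p (rfl | rfl) <;> dsimp only <;> omega
  · simp only [Finset.mem_insert, Finset.mem_singleton]
    rintro p (rfl | rfl) q (rfl | rfl) hpq <;> dsimp only at hpq ⊢ <;> simp_all <;> omega
  · simp only [Finset.mem_insert, Finset.mem_singleton]
    rintro p (rfl | rfl) q (rfl | rfl) <;> dsimp only <;> omega
  · simp only [Finset.mem_insert, Finset.mem_singleton, isEndpoint_pair]
    rintro p (rfl | rfl) l (rfl | rfl) <;> simp
  · simp only [Finset.mem_insert, Finset.mem_singleton]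
    rintro p (rfl | rfl) l hl₁ hl₂ <;> dsimp only at hl₁ hl₂
    · obtain ⟨q, hq, hlq, -⟩ := hW l hl₁ hl₂
      exact ⟨q, hq, hlq⟩
    · by_cases hlb : l ≤ b
      · exact hM.isEndpoint_of_mem_Icc hab hl₁.le hlb
      by_cases hlc : c ≤ l
      · exact hM.isEndpoint_of_mem_Icc hcd hlc hl₂.le
      obtain ⟨q, hq, hlq, -⟩ := hW l (by omega) (by omega)
      exact ⟨q, hq, hlq⟩
  · simp only [Finset.mem_insert, Finset.mem_singleton, isEndpoint_pair]
    rintro r (rfl | rfl) l (rfl | rfl) <;> simp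
  · simp only [Finset.mem_sdiff, Finset.mem_insert, Finset.mem_singleton, not_or]
    rintro e ⟨he, hne₁, hne₂⟩ p hp
    have := hM.disjoint_or_nested he hab hne₁
    have := hM.disjoint_or_nested he hcd hne₂
    have := hW.inside_or_outside hM he
    have := hM.lt he
    rcases hp with rfl | rfl <;> dsimp only at * <;> omega

/-- Otherwise `(a, d), (b, c)` could be replaced by `(a, b), (c, d)`. -/
lemma lam_eq_of_nested {a b c d : Fin n} (had : (a, d) ∈ M) (hbc : (b, c) ∈ M) (hab : a < b)
    (hcd : c < d) (hW : IsFilledBetween M a b) : lam a = lam b := by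
  by_contra hL
  have h₁ := hM.lt hbc
  dsimp only at h₁
  have hR : {(a, d), (b, c)} ⊆ M := by simp [Finset.insert_subset_iff, had, hbc]
  refine hRig.false_of_exchange hOr (A := {(a, b), (c, d)}) hR ?_
    (Finset.insert_nonempty _ _) ?_ ?_ ?_
  · simp only [Finset.disjoint_left, Finset.mem_insert, Finset.mem_singleton]
    rintro p (rfl | rfl) hp
    · have := hM.eq_of_endpoint hp had (Or.inl rfl) (Or.inl rfl)
      simp only [Prod.ext_iff] at this; omega
    · have := hM.eq_of_endpoint hp had (Or.inr rfl) (Or.inr rfl)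
      simp only [Prod.ext_iff] at this; omega
  · rw [Finset.card_pair, Finset.card_pair] <;> simp only [ne_eq, Prod.ext_iff] <;> omega
  · intro p hp
    simp only [Finset.mem_insert, Finset.mem_singleton] at hp
    rcases hp with rfl | rfl
    · exact hL
    · exact Bool.ne_of_ne_of_ne_of_ne (hOr (b, c) hbc).symm (Ne.symm hL) (hOr (a, d) had)
  apply hM.sdiff_union hR
  · simp only [Finset.mem_insert, Finset.mem_singleton]
    rintro p (rfl | rfl) <;> dsimp only <;> omega
  · simp only [Finset.mem_insert, Finset.mem_singleton]
    rintro p (rfl | rfl) q (rfl | rfl) hpq <;> dsimp only at hpq ⊢ <;> simp_all <;> omega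
  · simp only [Finset.mem_insert, Finset.mem_singleton]
    rintro p (rfl | rfl) q (rfl | rfl) <;> dsimp only <;> omega
  · simp only [Finset.mem_insert, Finset.mem_singleton, isEndpoint_pair]
    rintro p (rfl | rfl) l (rfl | rfl) <;> simp
  · simp only [Finset.mem_insert, Finset.mem_singleton]
    rintro p (rfl | rfl) l hl₁ hl₂ <;> dsimp only at hl₁ hl₂
    · obtain ⟨q, hq, hlq, -⟩ := hW l hl₁ hl₂
      exact ⟨q, hq, hlq⟩
    · exact hM.2.2.2 _ had l (by dsimp only; omega) hl₂
  · simp only [Finset.mem_insert, Finset.mem_singleton, isEndpoint_pair]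
    rintro r (rfl | rfl) l (rfl | rfl) <;> simp
  · simp only [Finset.mem_sdiff, Finset.mem_insert, Finset.mem_singleton, not_or]
    rintro e ⟨he, hne₁, hne₂⟩ p hp
    have := hM.disjoint_or_nested he had hne₁
    have := hM.disjoint_or_nested he hbc hne₂
    have := hW.inside_or_outside hM he
    have := hM.lt he
    rcases hp with rfl | rfl <;> dsimp only at * <;> omega

/-- Otherwise `(x, u)` could be replaced by `(u, g)`, freeing `x`. -/
lemma lam_eq_of_isFree_right {x u g : Fin n} (hxu : (x, u) ∈ M) (hg : IsFree M g) (hug : u < g)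
    (hW : IsFilledBetween M u g) : lam u = lam g := by
  by_contra hL
  have h₁ := hM.lt hxu
  dsimp only at h₁
  have hR : {(x, u)} ⊆ M := Finset.singleton_subset_iff.2 hxu
  refine hRig.false_of_exchange hOr (A := {(u, g)}) hR ?_ (Finset.singleton_nonempty _)
    (by simp) ?_ ?_
  · simp only [Finset.disjoint_singleton_left]
    exact fun hp => not_isFree_iff.2 ⟨_, hp, Or.inr rfl⟩ hg
  · simpa [OrientedFor] using hL
  apply hM.sdiff_union hR
  · simpa using hug
  · simp
  · simp only [Finset.mem_singleton]
    rintro p rfl q rfl; dsimp only; omega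
  · simp only [Finset.mem_singleton, isEndpoint_singleton]
    rintro p rfl l (rfl | rfl)
    · simp
    · exact Or.inr hg
  · simp only [Finset.mem_singleton]
    rintro p rfl l hl₁ hl₂
    obtain ⟨q, hq, hlq, -⟩ := hW l hl₁ hl₂
    exact ⟨q, hq, hlq⟩
  · simp only [Finset.mem_singleton, isEndpoint_singleton]
    rintro r rfl l (rfl | rfl)
    · refine Or.inr fun e he => ?_
      simp only [Finset.mem_union, Finset.mem_sdiff, Finset.mem_singleton] at he
      rcases he with ⟨he, hne⟩ | rfl
      · have := hM.disjoint_or_nested he hxu hne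
        have := hW.inside_or_outside hM he
        have := hM.not_mem_Icc_of_isFree hg he
        have := hM.lt he
        dsimp only at *; omega
      · dsimp only; omega
    · simp
  · simp only [Finset.mem_sdiff, Finset.mem_singleton]
    rintro e ⟨he, hne⟩ p rfl
    have := hM.disjoint_or_nested he hxu hne
    have := hW.inside_or_outside hM he
    have := hM.lt he
    dsimp only at *; omega

/-- Otherwise `(u, x)` could be replaced by `(g, u)`, freeing `x`. -/
lemma lam_eq_of_isFree_left {u x g : Fin n} (hux : (u, x) ∈ M) (hg : IsFree M g) (hgu : g < u)
    (hW : IsFilledBetween M g u) : lam g = lam u := by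
  by_contra hL
  have h₁ := hM.lt hux
  dsimp only at h₁
  have hR : {(u, x)} ⊆ M := Finset.singleton_subset_iff.2 hux
  refine hRig.false_of_exchange hOr (A := {(g, u)}) hR ?_ (Finset.singleton_nonempty _)
    (by simp) ?_ ?_
  · simp only [Finset.disjoint_singleton_left]
    exact fun hp => not_isFree_iff.2 ⟨_, hp, Or.inl rfl⟩ hg
  · simpa [OrientedFor] using hL
  apply hM.sdiff_union hR
  · simpa using hgu
  · simp
  · simp only [Finset.mem_singleton]
    rintro p rfl q rfl; dsimp only; omega
  · simp only [Finset.mem_singleton, isEndpoint_singleton]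
    rintro p rfl l (rfl | rfl)
    · exact Or.inr hg
    · simp
  · simp only [Finset.mem_singleton]
    rintro p rfl l hl₁ hl₂
    obtain ⟨q, hq, hlq, -⟩ := hW l hl₁ hl₂
    exact ⟨q, hq, hlq⟩
  · simp only [Finset.mem_singleton, isEndpoint_singleton]
    rintro r rfl l (rfl | rfl)
    · simp
    · refine Or.inr fun e he => ?_
      simp only [Finset.mem_union, Finset.mem_sdiff, Finset.mem_singleton] at he
      rcases he with ⟨he, hne⟩ | rfl
      · have := hM.disjoint_or_nested he hux hne
        have := hW.inside_or_outside hM he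
        have := hM.not_mem_Icc_of_isFree hg he
        have := hM.lt he
        dsimp only at *; omega
      · dsimp only; omega
  · simp only [Finset.mem_sdiff, Finset.mem_singleton]
    rintro e ⟨he, hne⟩ p rfl
    have := hM.disjoint_or_nested he hux hne
    have := hW.inside_or_outside hM he
    have := hM.lt he
    dsimp only at *; omega

lemma lam_eq_of_isFilledBetween {F : Bool} (hfree : ∀ l, IsFree M l → lam l = F) {u v : Fin n}
    (huv : u < v) (hW : IsFilledBetween M u v) (hu : IsFree M u ∨ ∃ a, (a, u) ∈ M)
    (hv : IsFree M v ∨ ∃ d, (v, d) ∈ M) : lam u = lam v := by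
  rcases hu with hu | ⟨a, hau⟩ <;> rcases hv with hv | ⟨d, hvd⟩
  · rw [hfree u hu, hfree v hv]
  · exact hRig.lam_eq_of_isFree_left hM hOr hvd hu huv hW
  · exact hRig.lam_eq_of_isFree_right hM hOr hau hv huv hW
  · exact hRig.lam_eq_of_sibling hM hOr hau hvd huv hW

lemma exists_inner {p : Fin n × Fin n} (hp : p ∈ M) (hw : p.1.val + 1 < p.2.val) :
    ∃ q ∈ M, q.1.val = p.1.val + 1 ∧ q.2.val + 1 = p.2.val := by
  obtain ⟨a, b⟩ := p
  dsimp only at hw ⊢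
  obtain ⟨a', ha'⟩ := Fin.exists_val_eq (n := n) (m := a.val + 1) (by omega)
  obtain ⟨⟨s, t⟩, hst, hl, hs, ht⟩ :=
    hM.isFilledBetween hp a' (by dsimp only; omega) (by dsimp only; omega)
  have hst' := hM.lt hst
  dsimp only at hl hs ht hst'
  rcases (show t.val + 1 = b.val ∨ t.val + 1 < b.val by omega) with htb | htb
  · exact ⟨(s, t), hst, by dsimp only; omega, htb⟩
  -- Otherwise a second child `(s', t')` starts at `t + 1`, and the three moves force
  -- `lam s = lam a = lam s' = lam t`.
  obtain ⟨y, hy⟩ := Fin.exists_val_eq (n := n) (m := t.val + 1) (by omega)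
  obtain ⟨⟨s', t'⟩, hst₂, hl₂, hs₂, ht₂⟩ :=
    hM.isFilledBetween hp y (by dsimp only; omega) (by dsimp only; omega)
  have hst₂' := hM.lt hst₂
  dsimp only at hl₂ hs₂ ht₂ hst₂'
  have hys : y = s' := by
    refine hl₂.resolve_right fun hyt => ?_
    have := hM.snd_le_of_mem_Icc hst hst₂ (by dsimp only; omega) (by dsimp only; omega)
    dsimp only at this; omega
  have e₁ := hRig.lam_eq_of_sibling hM hOr hst hst₂ (by omega)
    (isFilledBetween_of_succ M (by omega))
  have e₂ := hRig.lam_eq_of_nested hM hOr hp hst (by omega) ht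
    (isFilledBetween_of_succ M (by omega))
  have e₃ := hRig.lam_eq_of_nested hM hOr hp hst₂ hs₂ ht₂
    (hM.isFilledBetween_of_mem hst (by dsimp only; omega) (by dsimp only; omega))
  exact (hOr _ hst (by dsimp only; rw [← e₂, e₃, ← e₁])).elim

/-- By `exists_inner` the cups under `p` form a rainbow, whose left half repeats the letter at
`p.1`. -/
lemma lam_ne_of_lam_ne {p : Fin n × Fin n} (hp : p ∈ M) {x y : Fin n} (hx : p.1 ≤ x)
    (hxy : x ≤ y) (hy : y ≤ p.2) (h : lam x ≠ lam p.1) : lam y ≠ lam p.1 := by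
  induction hw : p.2.val - p.1.val using Nat.strong_induction_on generalizing p with
  | _ w ih =>
    rcases hy.eq_or_lt with rfl | hy
    · exact (hOr p hp).symm
    have hx' : p.1 < x := lt_of_le_of_ne hx fun h' => h (by rw [h'])
    obtain ⟨q, hq, hq₁, hq₂⟩ := hRig.exists_inner hM hOr hp (by omega)
    have hpq : lam p.1 = lam q.1 := hRig.lam_eq_of_nested hM hOr (a := p.1) (d := p.2)
      (b := q.1) (c := q.2) hp hq (by omega) (by omega) (isFilledBetween_of_succ M hq₁.symm)
    rw [hpq] at h ⊢
    exact ih _ (by omega) hq (by omega) (by omega) h rfl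

lemma lam_eq_of_mem_Icc {p : Fin n × Fin n} (hp : p ∈ M) {x y z : Fin n} (hx : p.1 ≤ x)
    (hxy : x ≤ y) (hyz : y ≤ z) (hz : z ≤ p.2) (hxz : lam x = lam z) : lam y = lam x := by
  by_cases hx₁ : lam x = lam p.1
  · by_contra hy
    exact hRig.lam_ne_of_lam_ne hM hOr hp (hx.trans hxy) hyz hz (by rwa [← hx₁])
      (by rw [← hxz, hx₁])
  · exact (Bool.eq_not_iff.2 (hRig.lam_ne_of_lam_ne hM hOr hp hx hxy (hyz.trans hz) hx₁)).trans
      (Bool.eq_not_iff.2 hx₁).symm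

end IsRigid

def IsConsecutive (lam : Fin n → Bool) (L : Bool) : Prop :=
  ∀ a b c : Fin n, a ≤ b → b ≤ c → lam a = L → lam c = L → lam b = L

namespace IsRigid

variable {lam : Fin n → Bool} {M : Finset (Fin n × Fin n)} (hRig : IsRigid lam M)
  (hM : IsCupDiagram M) (hOr : OrientedFor lam M) {F : Bool}
  (hfree : ∀ l, IsFree M l → lam l = F)
include hRig hM hOr hfree

/-- An outermost cup with neighbours on both sides would have the same letter at both ends. -/
lemma fst_eq_zero_or_of_isOutermost {O : Fin n × Fin n} (hO : O ∈ M) (hout : IsOutermost M O) :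
    O.1.val = 0 ∨ O.2.val + 1 = n := by
  by_contra! h
  obtain ⟨a, ha⟩ := Fin.exists_val_eq (n := n) (m := O.1.val - 1) (by omega)
  obtain ⟨b, hb⟩ := Fin.exists_val_eq (n := n) (m := O.2.val + 1) (by omega)
  have hO' : (O.1, O.2) ∈ M := hO
  have hOlt := hM.lt hO
  have hla : IsFree M a ∨ ∃ c, (c, a) ∈ M :=
    (hM.isFree_or_exists_left hO hout (by omega)).imp_right fun h => h.imp fun _ h => h.1
  have hrb : IsFree M b ∨ ∃ d, (b, d) ∈ M :=
    (hM.isFree_or_exists_right hO hout hb.symm).imp_right fun h => h.imp fun _ h => h.1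
  have e₁ := hRig.lam_eq_of_isFilledBetween hM hOr hfree (by omega)
    (isFilledBetween_of_succ M (by omega)) hla (Or.inr ⟨_, hO'⟩)
  have e₂ := hRig.lam_eq_of_isFilledBetween hM hOr hfree (by omega)
    (isFilledBetween_of_succ M (by omega)) (Or.inr ⟨_, hO'⟩) hrb
  have e₃ := hRig.lam_eq_of_isFilledBetween hM hOr hfree (by omega)
    (hM.isFilledBetween_of_mem hO (by omega) (by omega)) hla hrb
  exact hOr O hO (by rw [← e₁, e₃, ← e₂])

/-- The outermost cup through the middle of a pattern `F, !F, F` reaches one end of the word and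
carries `!F` at its other end. Its neighbour there is then matched, so it starts an outermost cup
reaching the opposite end, and no position is left free. -/
lemma isConsecutive_of_isFree {f : Fin n} (hf : IsFree M f) : IsConsecutive lam F := by
  intro x y z hxy hyz hx hz
  by_contra hy
  obtain ⟨O, hO, hOy₁, hOy₂, hout⟩ :=
    hM.exists_outermost (not_isFree_iff.1 fun h => hy (hfree y h))
  have hO' : (O.1, O.2) ∈ M := hO
  have hOlt := hM.lt hO
  rcases hRig.fst_eq_zero_or_of_isOutermost hM hOr hfree hO hout with h₀ | hn
  · have hb : O.2.val + 1 < n := by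
      by_contra hb
      exact not_isFree_iff.2 (hM.isEndpoint_of_mem_Icc hO (l := f) (by omega) (by omega)) hf
    obtain ⟨b, hb'⟩ := Fin.exists_val_eq hb
    have hO₂ : lam O.2 ≠ F := fun h =>
      hy ((hRig.lam_eq_of_mem_Icc hM hOr hO (by omega) hxy hOy₂ le_rfl (by rw [hx, h])).trans hx)
    rcases hM.isFree_or_exists_right hO hout hb'.symm with hbf | ⟨d, hbd, hout'⟩
    · refine hO₂ ((hRig.lam_eq_of_isFilledBetween hM hOr hfree (by omega)
        (isFilledBetween_of_succ M (by omega)) (Or.inr ⟨_, hO'⟩) (Or.inl hbf)).trans ?_)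
      exact hfree b hbf
    · have hd := (hRig.fst_eq_zero_or_of_isOutermost hM hOr hfree hbd hout').resolve_left
        (by dsimp only; omega)
      exact not_isFree_iff.2 (hM.isEndpoint_of_cover hO hbd h₀ (by dsimp only; omega) hd f) hf
  · have ha : O.1.val ≠ 0 := fun h₀ =>
      not_isFree_iff.2 (hM.isEndpoint_of_mem_Icc hO (l := f) (by omega) (by omega)) hf
    obtain ⟨a, ha'⟩ := Fin.exists_val_eq (n := n) (m := O.1.val - 1) (by omega)
    have hO₁ : lam O.1 ≠ F := fun h =>
      hy ((hRig.lam_eq_of_mem_Icc hM hOr hO le_rfl hOy₁ hyz (by omega) (by rw [hz, h])).trans h)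
    rcases hM.isFree_or_exists_left hO hout (a := a) (by omega) with haf | ⟨c, hca, hout'⟩
    · refine hO₁ ((hRig.lam_eq_of_isFilledBetween hM hOr hfree (by omega)
        (isFilledBetween_of_succ M (by omega)) (Or.inl haf) (Or.inr ⟨_, hO'⟩)).symm.trans ?_)
      exact hfree a haf
    · have hc := (hRig.fst_eq_zero_or_of_isOutermost hM hOr hfree hca hout').resolve_right
        (by dsimp only; omega)
      exact not_isFree_iff.2 (hM.isEndpoint_of_cover hca hO hc (by dsimp only; omega) hn f) hf

/-- Without free positions there are at most two outermost cups `(0, b)` and `(b + 1, n - 1)`,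
and the letter at `b` and `b + 1` occupies a block. -/
lemma isConsecutive_of_forall_not_isFree (hall : ∀ l, ¬ IsFree M l) :
    IsConsecutive lam F ∨ IsConsecutive lam (!F) := by
  suffices h : ∃ Y, IsConsecutive lam Y by
    obtain ⟨Y, hY⟩ := h
    by_cases hYF : Y = F
    · exact Or.inl (hYF ▸ hY)
    · exact Or.inr (Bool.eq_not_iff.2 hYF ▸ hY)
  rcases Nat.eq_zero_or_pos n with rfl | hn
  · exact ⟨F, fun x => x.elim0⟩
  obtain ⟨z, hz⟩ := Fin.exists_val_eq hn
  obtain ⟨O, hO, hzO⟩ := not_isFree_iff.1 (hall z)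
  have hOlt := hM.lt hO
  have hO₁ : O.1.val = 0 := by omega
  have hout : IsOutermost M O := fun e _ he => by omega
  by_cases hb : O.2.val + 1 = n
  · exact ⟨F, fun x y w hxy hyw hx hw => (hRig.lam_eq_of_mem_Icc hM hOr hO (by omega) hxy hyw
      (by omega) (hx.trans hw.symm)).trans hx⟩
  obtain ⟨b, hb'⟩ := Fin.exists_val_eq (n := n) (m := O.2.val + 1) (by omega)
  obtain ⟨d, hbd, hout'⟩ := (hM.isFree_or_exists_right hO hout hb'.symm).resolve_left (hall b)
  have hd : d.val + 1 = n :=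
    (hRig.fst_eq_zero_or_of_isOutermost hM hOr hfree hbd hout').resolve_left (by dsimp only; omega)
  have hOb := hRig.lam_eq_of_sibling hM hOr (a := O.1) hO hbd (by omega)
    (isFilledBetween_of_succ M (by omega))
  refine ⟨lam O.2, fun x y w hxy hyw hx hw => ?_⟩
  by_cases hy : y ≤ O.2
  · exact (hRig.lam_eq_of_mem_Icc hM hOr hO (by omega) hxy hy le_rfl hx).trans hx
  · exact (hRig.lam_eq_of_mem_Icc hM hOr hbd (x := b) le_rfl (by omega) hyw
      (by dsimp only; omega) (hOb ▸ hw.symm)).trans hOb.symm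

theorem isConsecutive : IsConsecutive lam F ∨ ((∀ l, ¬ IsFree M l) ∧ IsConsecutive lam (!F)) := by
  by_cases h : ∃ f, IsFree M f
  · obtain ⟨f, hf⟩ := h
    exact Or.inl (hRig.isConsecutive_of_isFree hM hOr hfree hf)
  · have h := not_exists.1 h
    exact (hRig.isConsecutive_of_forall_not_isFree hM hOr hfree h).imp_right fun h' => ⟨h, h'⟩

end IsRigid

/-! ### Two rainbows -/

/-- The cups `(a - 1 - i, a + i)` and `(e - i, e + 1 + i)`: two rainbows at the ends of the
block `[a, e]`. -/
def twoRainbows (a e : Fin n) : Finset (Fin n × Fin n) :=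
  Finset.univ.filter fun p =>
    (p.1.val < a.val ∧ p.1.val + p.2.val + 1 = 2 * a.val) ∨
      (e.val < p.2.val ∧ p.1.val + p.2.val = 2 * e.val + 1)

section twoRainbows

variable {a e : Fin n}

lemma mem_twoRainbows {p : Fin n × Fin n} :
    p ∈ twoRainbows a e ↔ (p.1.val < a.val ∧ p.1.val + p.2.val + 1 = 2 * a.val) ∨
      (e.val < p.2.val ∧ p.1.val + p.2.val = 2 * e.val + 1) := by
  simp [twoRainbows]

variable (hbal : 2 * a.val + n ≤ 2 * e.val + 2)
include hbal

lemma isEndpoint_twoRainbows {l : Fin n} (hl : l.val < 2 * a.val ∨ 2 * e.val + 2 ≤ l.val + n) :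
    IsEndpoint (twoRainbows a e) l := by
  have := e.isLt
  rcases hl with hl | hl
  · obtain ⟨m, hm⟩ := Fin.exists_val_eq (n := n) (m := 2 * a.val - 1 - l.val) (by omega)
    by_cases hla : l.val < a.val
    · exact ⟨(l, m), mem_twoRainbows.2 (Or.inl ⟨hla, by dsimp only; omega⟩), Or.inl rfl⟩
    · exact ⟨(m, l), mem_twoRainbows.2 (Or.inl ⟨by dsimp only; omega, by dsimp only; omega⟩),
        Or.inr rfl⟩
  · obtain ⟨m, hm⟩ := Fin.exists_val_eq (n := n) (m := 2 * e.val + 1 - l.val) (by omega)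
    by_cases hle : e.val < l.val
    · exact ⟨(m, l), mem_twoRainbows.2 (Or.inr ⟨hle, by dsimp only; omega⟩), Or.inr rfl⟩
    · exact ⟨(l, m), mem_twoRainbows.2 (Or.inr ⟨by dsimp only; omega, by dsimp only; omega⟩),
        Or.inl rfl⟩

lemma isCupDiagram_twoRainbows : IsCupDiagram (twoRainbows a e) := by
  refine ⟨?_, ?_, ?_, ?_⟩
  · intro p hp
    have := mem_twoRainbows.1 hp
    omega
  · intro p hp q hq hpq
    have := mem_twoRainbows.1 hp
    have := mem_twoRainbows.1 hq
    have : ¬(p.1 = q.1 ∧ p.2 = q.2) := fun h => hpq (Prod.ext h.1 h.2)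
    omega
  · intro p hp q hq
    have := mem_twoRainbows.1 hp
    have := mem_twoRainbows.1 hq
    omega
  · intro p hp l h₁ h₂
    have := mem_twoRainbows.1 hp
    exact isEndpoint_twoRainbows hbal (by omega)

variable {lam : Fin n → Bool} {X : Bool} (hX : ∀ i, lam i = X ↔ a ≤ i ∧ i ≤ e)
include hX

lemma orientedFor_twoRainbows : OrientedFor lam (twoRainbows a e) := by
  intro p hp
  have := e.isLt
  rcases mem_twoRainbows.1 hp with h | h
  · rw [(hX p.2).2 (by omega)]
    exact fun h' => absurd ((hX p.1).1 h') (by omega)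
  · rw [(hX p.1).2 (by omega)]
    exact fun h' => absurd ((hX p.2).1 h'.symm) (by omega)

lemma card_twoRainbows :
    (twoRainbows a e).card = (Finset.univ.filter fun l => lam l = !X).card := by
  refine (isCupDiagram_twoRainbows hbal).card_eq_of_forall_isEndpoint
    (orientedFor_twoRainbows hbal hX) fun l hl => isEndpoint_twoRainbows hbal ?_
  have := (hX l).not.1 (Bool.eq_not_iff.1 hl)
  have := e.isLt
  omega

/-- A cup spans as many letters `X` as letters `!X`; this pins it to one of the rainbows. -/
lemma IsCupDiagram.subset_twoRainbows {M : Finset (Fin n × Fin n)} (hM : IsCupDiagram M)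
    (hOr : OrientedFor lam M) : M ⊆ twoRainbows a e := by
  intro p hp
  have hbalp := (hM.card_filter_Icc hOr hp X).trans (hM.card_filter_Icc hOr hp (!X)).symm
  have hor := hOr p hp
  have hlt := hM.lt hp
  have hnot : ∀ i, lam i = !X ↔ ¬(a ≤ i ∧ i ≤ e) := fun i => Bool.eq_not_iff.trans (hX i).not
  rw [mem_twoRainbows]
  by_cases h₁ : lam p.1 = X
  · have h₂ : ¬lam p.2 = X := h₁ ▸ hor.symm
    rw [hX] at h₁ h₂
    have e₁ : (Finset.Icc p.1 p.2).filter (fun l => lam l = X) = Finset.Icc p.1 e := by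
      ext l; simp only [Finset.mem_filter, Finset.mem_Icc, hX]; omega
    have e₂ : (Finset.Icc p.1 p.2).filter (fun l => lam l = !X) = Finset.Ioc e p.2 := by
      ext l; simp only [Finset.mem_filter, Finset.mem_Icc, Finset.mem_Ioc, hnot]; omega
    rw [e₁, e₂, Fin.card_Icc, Fin.card_Ioc] at hbalp
    omega
  · have h₂ : lam p.2 = X := by
      rw [Bool.eq_not_iff.2 hor.symm, Bool.eq_not_iff.2 h₁, Bool.not_not]
    rw [hX] at h₁ h₂
    have e₁ : (Finset.Icc p.1 p.2).filter (fun l => lam l = X) = Finset.Icc a p.2 := by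
      ext l; simp only [Finset.mem_filter, Finset.mem_Icc, hX]; omega
    have e₂ : (Finset.Icc p.1 p.2).filter (fun l => lam l = !X) = Finset.Ico p.1 a := by
      ext l; simp only [Finset.mem_filter, Finset.mem_Icc, Finset.mem_Ico, hnot]; omega
    rw [e₁, e₂, Fin.card_Icc, Fin.card_Ico] at hbalp
    omega

end twoRainbows

theorem IsConsecutive.existsUnique_cupDiagram {lam : Fin n → Bool} {X : Bool}
    (hX : IsConsecutive lam X)
    (hbal : (Finset.univ.filter fun l => lam l = !X).card ≤
      (Finset.univ.filter fun l => lam l = X).card) :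
    ∃! M : Finset (Fin n × Fin n), IsCupDiagram M ∧ OrientedFor lam M ∧
      M.card = (Finset.univ.filter fun l => lam l = !X).card := by
  set S := Finset.univ.filter fun l => lam l = X with hS
  rcases S.eq_empty_or_nonempty with hS₀ | hSne
  · have h₀ : (Finset.univ.filter fun l => lam l = !X).card = 0 := by
      rw [hS₀, Finset.card_empty] at hbal; omega
    refine ⟨∅, ⟨⟨by simp, by simp, by simp, by simp⟩, by simp [OrientedFor], by simp [h₀]⟩,
      fun M hM => Finset.card_eq_zero.1 (hM.2.2.trans h₀)⟩
  have hmem : ∀ i, i ∈ S ↔ lam i = X := by simp [hS]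
  set a := S.min' hSne
  set e := S.max' hSne
  have hXae : ∀ i, lam i = X ↔ a ≤ i ∧ i ≤ e := fun i =>
    ⟨fun h => ⟨S.min'_le i ((hmem i).2 h), S.le_max' i ((hmem i).2 h)⟩, fun h =>
      hX a i e h.1 h.2 ((hmem a).1 (S.min'_mem hSne)) ((hmem e).1 (S.max'_mem hSne))⟩
  have hcardX : S.card = e.val + 1 - a.val := by
    rw [← Fin.card_Icc]; congr 1; ext i; rw [hmem, hXae, Finset.mem_Icc]
  have hbal' : 2 * a.val + n ≤ 2 * e.val + 2 := by
    have := card_filter_add_card_filter_not lam X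
    rw [← hS] at this
    have := e.isLt
    have := S.min'_le_max' hSne
    omega
  refine ⟨twoRainbows a e, ⟨isCupDiagram_twoRainbows hbal', orientedFor_twoRainbows hbal' hXae,
    card_twoRainbows hbal' hXae⟩, fun M ⟨hM, hOr, hcard⟩ => ?_⟩
  exact Finset.eq_of_subset_of_card_le (hM.subset_twoRainbows hbal' hXae hOr)
    (by rw [hcard, card_twoRainbows hbal' hXae])

theorem existsUnique_cupDiagram_iff {lam : Fin n → Bool} {L : Bool}
    (hL : (Finset.univ.filter fun l => lam l = L).card ≤
      (Finset.univ.filter fun l => lam l = !L).card) :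
    (∃! M : Finset (Fin n × Fin n), IsCupDiagram M ∧ OrientedFor lam M ∧
        M.card = (Finset.univ.filter fun l => lam l = L).card) ↔
      ((Finset.univ.filter fun l => lam l = L).card ≤
          (Finset.univ.filter fun l => lam l = !L).card ∧ IsConsecutive lam (!L)) ∨
        ((Finset.univ.filter fun l => lam l = !L).card ≤
          (Finset.univ.filter fun l => lam l = L).card ∧ IsConsecutive lam L) := by
  constructor
  · rintro ⟨M, ⟨hM, hOr, hcard⟩, huniq⟩
    have hRig : IsRigid lam M := fun M' h₁ h₂ h₃ => huniq M' ⟨h₁, h₂, h₃.trans hcard⟩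
    rcases hRig.isConsecutive hM hOr fun l => hM.lam_eq_not_of_isFree hOr hcard with h | ⟨hall, h⟩
    · exact Or.inl ⟨hL, h⟩
    · have hbal : (Finset.univ.filter fun l => lam l = !L).card =
          (Finset.univ.filter fun l => lam l = L).card := by
        rw [← hcard, hM.card_eq_of_forall_isEndpoint hOr fun l _ => not_isFree_iff.1 (hall l)]
      exact Or.inr ⟨hbal.le, by rwa [Bool.not_not] at h⟩
  · rintro (⟨-, h⟩ | ⟨hbal, h⟩)
    · simpa only [Bool.not_not] using h.existsUnique_cupDiagram (by rwa [Bool.not_not])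
    · simpa only [le_antisymm hL hbal] using h.existsUnique_cupDiagram hbal

lemma existsUnique_admissibleFor_iff {lam : Fin n → Bool} {L : Bool} {c : ℕ}
    (hc : c = (Finset.univ.filter fun l => lam l = L).card) :
    (∃! M : Finset (Fin n × Fin n),
        IsCupDiagram M ∧ OrientedFor lam M ∧ AdmissibleFor lam M ∧ M.card = c) ↔
      ∃! M : Finset (Fin n × Fin n), IsCupDiagram M ∧ OrientedFor lam M ∧ M.card = c := by
  refine existsUnique_congr fun M => ⟨fun ⟨h₁, h₂, _, h₄⟩ => ⟨h₁, h₂, h₄⟩,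
    fun ⟨hM, hOr, hcard⟩ => ⟨hM, hOr, fun i j _ hi hj ⟨h₁, h₂⟩ => ?_, hcard⟩⟩
  have := (hM.lam_eq_not_of_isFree hOr (hcard.trans hc) hi).trans
    (hM.lam_eq_not_of_isFree hOr (hcard.trans hc) hj).symm
  rw [h₁, h₂] at this
  exact Bool.false_ne_true this

end

theorem stmt16_general (n k : ℕ) (lam : Fin n → Bool)
    (hlam : (Finset.univ.filter (fun i => lam i = true)).card = k) :
    (∃! M : Finset (Fin n × Fin n),
        IsCupDiagram M ∧ OrientedFor lam M ∧ AdmissibleFor lam M ∧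
        M.card = min k (n - k)) ↔
      ((k ≤ n - k ∧ ∀ a b c : Fin n, a ≤ b → b ≤ c →
          lam a = false → lam c = false → lam b = false) ∨
        (n - k ≤ k ∧ ∀ a b c : Fin n, a ≤ b → b ≤ c →
          lam a = true → lam c = true → lam b = true)) := by
  have hfalse : (Finset.univ.filter fun i => lam i = false).card = n - k := by
    have := card_filter_add_card_filter_not lam true
    rw [Bool.not_true] at this
    omega
  rcases le_total k (n - k) with hk | hk
  · rw [min_eq_left hk, existsUnique_admissibleFor_iff hlam.symm]
    have := existsUnique_cupDiagram_iff (lam := lam) (L := true)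
      (by rwa [Bool.not_true, hfalse, hlam])
    rwa [Bool.not_true, hfalse, hlam] at this
  · rw [min_eq_right hk, existsUnique_admissibleFor_iff hfalse.symm]
    have := existsUnique_cupDiagram_iff (lam := lam) (L := false)
      (by rwa [Bool.not_false, hfalse, hlam])
    rw [Bool.not_false, hlam, hfalse] at this
    exact this.trans or_comm

/-- For a word `λ` with exactly `k` letters `∧` (`true`), there is exactly one cup
diagram oriented and admissible for `λ` with `min(k, n-k)` cups if and only if
either `k ≤ n-k` and the positions of the `∨`'s (`false`) are consecutive, or
`n-k ≤ k` and the positions of the `∧`'s (`true`) are consecutive. -/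
theorem stmt16 (n k : ℕ) (hn : 2 ≤ n) (hk1 : 1 ≤ k) (hk2 : k ≤ n - 1)
    (lam : Fin n → Bool)
    (hlam : (Finset.univ.filter (fun i => lam i = true)).card = k) :
    (∃! M : Finset (Fin n × Fin n),
        IsCupDiagram M ∧ OrientedFor lam M ∧ AdmissibleFor lam M ∧
        M.card = min k (n - k)) ↔
      ((k ≤ n - k ∧ ∀ a b c : Fin n, a ≤ b → b ≤ c →
          lam a = false → lam c = false → lam b = false) ∨
        (n - k ≤ k ∧ ∀ a b c : Fin n, a ≤ b → b ≤ c →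
          lam a = true → lam c = true → lam b = true)) :=
  stmt16_general n k lam hlam
end
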